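/- arXiv:0812.1758 — 2 statements merged into one kernel-verified Lean document; each statement's English description precedes it below -/
import Mathlib

section
/- The map (Q,q,τ) ↦ μ(q n_τ^Q) is continuous on SO(3) × [0,∞) × (0,∞), and consequently the map (q,τ) ↦ μ*(q,τ) = inf_{Q ∈ SO(3)} μ(q n_τ^Q) is continuous on [0,∞) × (0,∞). -/
open MeasureTheory Real Set
open scoped RealInnerProductSpace

noncomputable section

/-- ℝ³ with its Euclidean structure. -/
abbrev E3 := EuclideanSpace ℝ (Fin 3)

/-- Reinterpret a plain vector `Fin 3 → ℝ` as an element of Euclidean space. -/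
def ofV (v : Fin 3 → ℝ) : E3 := WithLp.toLp 2 v

/-- Partial derivative `∂ᵢ f` of a scalar function on ℝ³. -/
def pd (f : E3 → ℝ) (i : Fin 3) (x : E3) : ℝ := fderiv ℝ f x (EuclideanSpace.single i 1)

/-- Divergence of a vector field: `div u = ∂₁u₁ + ∂₂u₂ + ∂₃u₃`. -/
def vdiv (u : E3 → E3) (x : E3) : ℝ := ∑ i, pd (fun y => u y i) i x

/-- Curl of a vector field:
`curl u = (∂₂u₃ − ∂₃u₂, ∂₃u₁ − ∂₁u₃, ∂₁u₂ − ∂₂u₁)`. -/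
def vcurl (u : E3 → E3) (x : E3) : E3 := ofV ![
  pd (fun y => u y 2) 1 x - pd (fun y => u y 1) 2 x,
  pd (fun y => u y 0) 2 x - pd (fun y => u y 2) 0 x,
  pd (fun y => u y 1) 0 x - pd (fun y => u y 0) 1 x]

/-- `|i∇ψ + Aψ|²(x) = Σⱼ |i ∂ⱼψ(x) + Aⱼ(x) ψ(x)|²`, the squared magnetic gradient. -/
def magSq (A : E3 → E3) (ψ : E3 → ℂ) (x : E3) : ℝ :=
  ∑ j, ‖Complex.I * fderiv ℝ ψ x (EuclideanSpace.single j 1) + (A x j : ℂ) * ψ x‖ ^ 2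

/-- `μ(A)`: the ground-state energy (lowest Neumann eigenvalue) of `(i∇+A)²` on `Ω`,
defined as the infimum of the Rayleigh quotient over admissible `ψ`. -/
def mu (Ω : Set E3) (A : E3 → E3) : ℝ :=
  sInf { r : ℝ | ∃ ψ : E3 → ℂ, ContDiffOn ℝ 1 ψ Ω ∧
    IntegrableOn (fun x => ‖ψ x‖ ^ 2) Ω ∧
    IntegrableOn (magSq A ψ) Ω ∧
    0 < (∫ x in Ω, ‖ψ x‖ ^ 2) ∧
    r = (∫ x in Ω, magSq A ψ x) / (∫ x in Ω, ‖ψ x‖ ^ 2) }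

/-- The rotation group SO(3) as a set of 3×3 real matrices. -/
def SO3 : Set (Matrix (Fin 3) (Fin 3) ℝ) := { Q | Q.transpose * Q = 1 ∧ Q.det = 1 }

/-- The helical field `n_τ(x) = (cos(τx₃), sin(τx₃), 0)`. -/
def nhel (τ : ℝ) (x : E3) : E3 := ofV ![Real.cos (τ * x 2), Real.sin (τ * x 2), 0]

/-- `n_τ^Q(x) = Q n_τ(Qᵀ x)`. -/
def nQ (τ : ℝ) (Q : Matrix (Fin 3) (Fin 3) ℝ) (x : E3) : E3 :=
  ofV (Q.mulVec (nhel τ (ofV (Q.transpose.mulVec (fun i => x i)))))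

/-- `μ*(q,τ) = inf_{Q ∈ SO(3)} μ(q n_τ^Q)`. -/
def muStar (Ω : Set E3) (q τ : ℝ) : ℝ := ⨅ Q : SO3, mu Ω (fun x => q • nQ τ Q.1 x)

/-- `|∇u|² = Σ_{i,j} (∂ᵢuⱼ)²`. -/
def gradSq (u : E3 → E3) (x : E3) : ℝ := ∑ i, ∑ j, (pd (fun y => u y j) i x) ^ 2

/-- Second partial derivative `∂ᵢ∂ᵢ f`. -/
def pd2 (f : E3 → ℝ) (i : Fin 3) : E3 → ℝ := pd (pd f i) i

/-- Componentwise Laplacian of a vector field. -/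
def vlap (u : E3 → E3) (x : E3) : E3 := ofV (fun j => ∑ i, pd2 (fun y => u y j) i x)

/-- The Landau–de Gennes functional
`F(ψ,n) = ∫|i∇ψ+qnψ|² − κ²∫|ψ|² + (κ²/2)∫|ψ|⁴ + K₁∫(div n)² + K₂∫|curl n + τn|²`. -/
def LdG (Ω : Set E3) (q τ κ K₁ K₂ : ℝ) (ψ : E3 → ℂ) (n : E3 → E3) : ℝ :=
  (∫ x in Ω, magSq (fun y => q • n y) ψ x) - κ ^ 2 * (∫ x in Ω, ‖ψ x‖ ^ 2)
    + κ ^ 2 / 2 * (∫ x in Ω, ‖ψ x‖ ^ 4)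
    + K₁ * (∫ x in Ω, (vdiv n x) ^ 2)
    + K₂ * (∫ x in Ω, ‖vcurl n x + τ • n x‖ ^ 2)

/-- Smooth compactly supported test vector fields in `Ω`. -/
def testFields (Ω : Set E3) : Set (E3 → E3) :=
  { u | ContDiff ℝ (⊤ : ℕ∞) u ∧ HasCompactSupport u ∧ tsupport u ⊆ Ω }

/-- The quadratic form `Q_τ(u) = ‖div u‖²_{L²} + ‖curl u + τu‖²_{L²}`. -/
def Qform (Ω : Set E3) (τ : ℝ) (u : E3 → E3) : ℝ :=
  (∫ x in Ω, (vdiv u x) ^ 2) + ∫ x in Ω, ‖vcurl u x + τ • u x‖ ^ 2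

/-- `μ_τ`: the bottom of the quadratic form `Q_τ` over test fields (ground state of
`T_τ = −Δ + 2τ curl + τ²` with Dirichlet conditions). -/
def muT (Ω : Set E3) (τ : ℝ) : ℝ :=
  sInf { r : ℝ | ∃ u ∈ testFields Ω, u ≠ 0 ∧ r = Qform Ω τ u / ∫ x in Ω, ‖u x‖ ^ 2 }

/-- `λ₁`: the lowest Dirichlet eigenvalue of `−Δ` on `Ω`, via the Rayleigh quotient. -/
def lam1 (Ω : Set E3) : ℝ :=
  sInf { r : ℝ | ∃ u ∈ testFields Ω, u ≠ 0 ∧ r = (∫ x in Ω, gradSq u x) / ∫ x in Ω, ‖u x‖ ^ 2 }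
-- helper 1
lemma abs_coord_le (v : E3) (j : Fin 3) : |v j| ≤ ‖v‖ := by
  rw [EuclideanSpace.norm_eq, ← Real.sqrt_sq_eq_abs]
  apply Real.sqrt_le_sqrt
  have h : (v j) ^ 2 = ‖v j‖ ^ 2 := by simp [Real.norm_eq_abs, sq_abs]
  rw [h]
  exact Finset.single_le_sum (f := fun i => ‖v i‖ ^ 2) (fun i _ => by positivity) (Finset.mem_univ j)

-- helper: continuity of nhel

def Afield (p : Matrix (Fin 3) (Fin 3) ℝ × ℝ × ℝ) : E3 → E3 := fun x => p.2.1 • nQ p.2.2 p.1 x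

set_option maxHeartbeats 1000000 in
lemma continuous_G : Continuous (fun pz : (Matrix (Fin 3) (Fin 3) ℝ × ℝ × ℝ) × E3 => Afield pz.1 pz.2) := by
  change Continuous fun pz : (Matrix (Fin 3) (Fin 3) ℝ × ℝ × ℝ) × E3 =>
    WithLp.toLp 2 (fun j : Fin 3 => (Afield pz.1 pz.2) j)
  apply (PiLp.continuous_toLp 2 _).comp
  apply continuous_pi
  intro j
  show Continuous fun pz : (Matrix (Fin 3) (Fin 3) ℝ × ℝ × ℝ) × E3 =>
    pz.1.2.1 * (pz.1.1.mulVec (nhel pz.1.2.2 (ofV (pz.1.1.transpose.mulVec fun i => pz.2 i)))) j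
  apply Continuous.mul continuous_fst.snd.fst
  show Continuous fun pz : (Matrix (Fin 3) (Fin 3) ℝ × ℝ × ℝ) × E3 =>
    ∑ k, pz.1.1 j k * (nhel pz.1.2.2 (ofV (pz.1.1.transpose.mulVec fun i => pz.2 i))) k
  apply continuous_finset_sum
  intro k _
  apply Continuous.mul (((continuous_apply k).comp ((continuous_apply j).comp continuous_fst.fst) :
    Continuous fun pz : (Matrix (Fin 3) (Fin 3) ℝ × ℝ × ℝ) × E3 => pz.1.1 j k))
  have hy : Continuous fun pz : (Matrix (Fin 3) (Fin 3) ℝ × ℝ × ℝ) × E3 =>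
      (ofV (pz.1.1.transpose.mulVec fun i => pz.2 i)) 2 := by
    show Continuous fun pz : (Matrix (Fin 3) (Fin 3) ℝ × ℝ × ℝ) × E3 => ∑ m, pz.1.1.transpose 2 m * pz.2 m
    apply continuous_finset_sum
    intro m _
    exact ((continuous_apply m).comp ((continuous_apply (2 : Fin 3)).comp (continuous_fst.fst.matrix_transpose))).mul
      ((continuous_apply m).comp ((PiLp.continuous_ofLp 2 _).comp continuous_snd))
  have harg : Continuous fun pz : (Matrix (Fin 3) (Fin 3) ℝ × ℝ × ℝ) × E3 =>
      pz.1.2.2 * (ofV (pz.1.1.transpose.mulVec fun i => pz.2 i)) 2 := continuous_fst.snd.snd.mul hy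
  fin_cases k
  · exact Real.continuous_cos.comp harg
  · exact Real.continuous_sin.comp harg
  · exact continuous_const

lemma continuous_Afield (p : Matrix (Fin 3) (Fin 3) ℝ × ℝ × ℝ) : Continuous (Afield p) :=
  continuous_G.comp (Continuous.prodMk_right p)

lemma nQ_sq_sum {Q : Matrix (Fin 3) (Fin 3) ℝ} (hQ : Q ∈ SO3) (τ : ℝ) (x : E3) :
    ∑ j, (nQ τ Q x j) ^ 2 = 1 := by
  have key : ∀ w : Fin 3 → ℝ, ∑ j, (Q.mulVec w j) ^ 2 = ∑ j, (w j) ^ 2 := by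
    intro w
    have h1 : ∑ j, (Q.mulVec w j) ^ 2 = dotProduct (Q.mulVec w) (Q.mulVec w) := by
      simp [dotProduct, sq]
    rw [h1, Matrix.dotProduct_mulVec, ← Matrix.mulVec_transpose, Matrix.mulVec_mulVec, hQ.1,
      Matrix.one_mulVec]
    simp [dotProduct, sq]
  show ∑ j, (Q.mulVec (nhel τ (ofV (Q.transpose.mulVec (fun i => x i)))) j) ^ 2 = 1
  rw [key]
  set y := (ofV (Q.transpose.mulVec (fun i => x i)))
  show ∑ j, (nhel τ y j) ^ 2 = 1
  unfold nhel ofV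
  rw [Fin.sum_univ_three]
  simp [Real.cos_sq_add_sin_sq]

lemma Afield_sq_sum {Q : Matrix (Fin 3) (Fin 3) ℝ} (hQ : Q ∈ SO3) (q τ : ℝ) (x : E3) :
    ∑ j, (Afield (Q, q, τ) x j) ^ 2 = q ^ 2 := by
  show ∑ j, (q • nQ τ Q x j) ^ 2 = q ^ 2
  have : ∀ j, (q • nQ τ Q x j : ℝ) = q * nQ τ Q x j := fun j => rfl
  calc ∑ j, (q • nQ τ Q x j) ^ 2 = ∑ j, q ^ 2 * (nQ τ Q x j) ^ 2 := by
        refine Finset.sum_congr rfl fun j _ => ?_; rw [this j]; ring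
    _ = q ^ 2 := by rw [← Finset.mul_sum, nQ_sq_sum hQ, mul_one]


instance matPMS : PseudoMetricSpace (Matrix (Fin 3) (Fin 3) ℝ) :=
  inferInstanceAs (PseudoMetricSpace (Fin 3 → Fin 3 → ℝ))
instance matProper : ProperSpace (Matrix (Fin 3) (Fin 3) ℝ) :=
  inferInstanceAs (ProperSpace (Fin 3 → Fin 3 → ℝ))

lemma one_mem_SO3 : (1 : Matrix (Fin 3) (Fin 3) ℝ) ∈ SO3 :=
  ⟨by simp [Matrix.transpose_one], by simp⟩

lemma isCompact_SO3 : IsCompact SO3 := by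
  have hclosed : IsClosed SO3 := by
    have h1 : IsClosed {Q : Matrix (Fin 3) (Fin 3) ℝ | Q.transpose * Q = 1} :=
      isClosed_eq ((continuous_id.matrix_transpose).matrix_mul continuous_id) continuous_const
    have h2 : IsClosed {Q : Matrix (Fin 3) (Fin 3) ℝ | Q.det = 1} :=
      isClosed_eq (continuous_id.matrix_det) continuous_const
    exact h1.inter h2
  have hbdd : Bornology.IsBounded SO3 := by
    apply (Metric.isBounded_closedBall (x := (0 : Matrix (Fin 3) (Fin 3) ℝ)) (r := 1)).subset
    intro Q hQ
    rw [Metric.mem_closedBall]; refine (dist_pi_le_iff zero_le_one).2 ?_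
    intro i
    rw [dist_pi_le_iff zero_le_one]
    intro j
    have h := congrFun (congrFun hQ.1 j) j
    rw [Matrix.mul_apply, Matrix.one_apply_eq] at h
    have hsum : ∑ k, Q k j ^ 2 = 1 := by
      rw [← h]; exact Finset.sum_congr rfl fun k _ => by rw [Matrix.transpose_apply, sq]
    have hle : Q i j ^ 2 ≤ 1 := by
      rw [← hsum]
      exact Finset.single_le_sum (f := fun k => Q k j ^ 2) (fun k _ => sq_nonneg _) (Finset.mem_univ i)
    have : dist (Q i j) ((0 : Matrix (Fin 3) (Fin 3) ℝ) i j) = |Q i j| := by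
      rw [Real.dist_eq]; norm_num
    rw [this]
    exact abs_le.mpr ⟨by nlinarith, by nlinarith⟩
  exact Metric.isCompact_of_isClosed_isBounded hclosed hbdd

-- the admissible set
def Sset (Ω : Set E3) (A : E3 → E3) : Set ℝ :=
  { r : ℝ | ∃ ψ : E3 → ℂ, ContDiffOn ℝ 1 ψ Ω ∧
    IntegrableOn (fun x => ‖ψ x‖ ^ 2) Ω ∧
    IntegrableOn (magSq A ψ) Ω ∧
    0 < (∫ x in Ω, ‖ψ x‖ ^ 2) ∧
    r = (∫ x in Ω, magSq A ψ x) / (∫ x in Ω, ‖ψ x‖ ^ 2) }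

lemma S_nonneg (Ω : Set E3) (A : E3 → E3) : ∀ r ∈ Sset Ω A, 0 ≤ r := by
  rintro r ⟨ψ, _, _, _, hpos, rfl⟩
  apply div_nonneg _ hpos.le
  apply integral_nonneg
  intro x
  unfold magSq
  positivity
lemma young_ineq {ε : ℝ} (hε : 0 < ε) (a b : ℝ) :
    (a + b) ^ 2 ≤ (1 + ε) * a ^ 2 + (1 + ε⁻¹) * b ^ 2 := by
  have hne : ε ≠ 0 := hε.ne'
  have key : ε * ((1 + ε) * a ^ 2 + (1 + ε⁻¹) * b ^ 2 - (a + b) ^ 2) = (ε * a - b) ^ 2 := by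
    field_simp
    ring
  have h2 : 0 ≤ ε * ((1 + ε) * a ^ 2 + (1 + ε⁻¹) * b ^ 2 - (a + b) ^ 2) := key ▸ sq_nonneg _
  nlinarith [h2, hε]

lemma magSq_one (A : E3 → E3) (x : E3) : magSq A (fun _ => 1) x = ∑ j, (A x j) ^ 2 := by
  unfold magSq
  refine Finset.sum_congr rfl fun j _ => ?_
  rw [fderiv_fun_const]
  simp [Complex.norm_real, Real.norm_eq_abs, sq_abs]

lemma magSq_continuousOn {Ω : Set E3} (hopen : IsOpen Ω) {A : E3 → E3} (hA : Continuous A)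
    {ψ : E3 → ℂ} (hψ : ContDiffOn ℝ 1 ψ Ω) : ContinuousOn (magSq A ψ) Ω := by
  have hf : ContinuousOn (fderiv ℝ ψ) Ω := hψ.continuousOn_fderiv_of_isOpen hopen le_rfl
  have hψc : ContinuousOn ψ Ω := hψ.continuousOn
  unfold magSq
  apply continuousOn_finset_sum
  intro j _
  apply ContinuousOn.pow
  apply ContinuousOn.norm
  apply ContinuousOn.add
  · exact continuousOn_const.mul
      (((ContinuousLinearMap.apply ℝ ℂ (EuclideanSpace.single j (1:ℝ))).continuous).comp_continuousOn hf)
  · exact (Complex.continuous_ofReal.comp_continuousOn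
      (((continuous_apply j).comp ((PiLp.continuous_ofLp 2 _).comp hA)).continuousOn)).mul hψc

lemma S_one {Ω : Set E3} (hne : Ω.Nonempty) (hopen : IsOpen Ω) (hbdd : Bornology.IsBounded Ω)
    {A : E3 → E3} (hA : Continuous A) {C : ℝ} (hC : ∀ x ∈ Ω, ∑ j, (A x j) ^ 2 ≤ C) :
    ∃ r ∈ Sset Ω A, r ≤ C := by
  have hmeas : MeasurableSet Ω := hopen.measurableSet
  have hfin : volume Ω < ⊤ := hbdd.measure_lt_top
  have hvol : 0 < (volume Ω).toReal := ENNReal.toReal_pos (hopen.measure_pos volume hne).ne' hfin.ne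
  have hint1 : IntegrableOn (fun x : E3 => ‖(1:ℂ)‖ ^ 2) Ω := by
    simpa using integrableOn_const (C := (1:ℝ)) hfin.ne
  have hconta : Continuous (magSq A (fun _ => 1)) := by
    have h2 : Continuous fun x => ∑ j, (A x j) ^ 2 :=
      continuous_finset_sum _ fun j _ => ((continuous_apply j).comp ((PiLp.continuous_ofLp 2 _).comp hA)).pow 2
    exact (funext (magSq_one A) : magSq A (fun _ => 1) = _) ▸ h2
  have hint2 : IntegrableOn (magSq A (fun _ => 1)) Ω :=
    (ContinuousOn.integrableOn_compact hbdd.isCompact_closure hconta.continuousOn).mono_set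
      subset_closure
  have hpos : 0 < (∫ x in Ω, ‖(1:ℂ)‖ ^ 2) := by
    simpa [Measure.real] using hvol
  refine ⟨_, ⟨fun _ => 1, contDiffOn_const, hint1, hint2, hpos, rfl⟩, ?_⟩
  rw [div_le_iff₀ hpos]
  have hb : ∫ x in Ω, magSq A (fun _ => 1) x ≤ ∫ _x in Ω, C := by
    apply setIntegral_mono_on hint2 (integrableOn_const (C := C) hfin.ne) hmeas
    intro x hx
    rw [magSq_one]
    exact hC x hx
  calc ∫ x in Ω, magSq A (fun _ => 1) x ≤ ∫ _x in Ω, C := hb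
    _ = C * ∫ x in Ω, ‖(1:ℂ)‖ ^ 2 := by simp [mul_comm]

lemma mu_eq_sInf (Ω : Set E3) (A : E3 → E3) : mu Ω A = sInf (Sset Ω A) := rfl

lemma mu_nonneg (Ω : Set E3) (A : E3 → E3) : 0 ≤ mu Ω A :=
  Real.sInf_nonneg (S_nonneg Ω A)

lemma mu_le_of_mem {Ω : Set E3} {A : E3 → E3} {r : ℝ} (hr : r ∈ Sset Ω A) : mu Ω A ≤ r :=
  csInf_le ⟨0, S_nonneg Ω A⟩ hr

lemma mu_le_C {Ω : Set E3} (hne : Ω.Nonempty) (hopen : IsOpen Ω) (hbdd : Bornology.IsBounded Ω)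
    {A : E3 → E3} (hA : Continuous A) {C : ℝ} (hC : ∀ x ∈ Ω, ∑ j, (A x j) ^ 2 ≤ C) :
    mu Ω A ≤ C := by
  obtain ⟨r, hr, hrC⟩ := S_one hne hopen hbdd hA hC
  exact le_trans (mu_le_of_mem hr) hrC

lemma mu_comp {Ω : Set E3} (hne : Ω.Nonempty) (hopen : IsOpen Ω) (hbdd : Bornology.IsBounded Ω)
    {A B : E3 → E3} (hAc : Continuous A) (hBc : Continuous B)
    {δ ε : ℝ} (hδ : 0 < δ) (hε : 0 < ε)
    (hAB : ∀ x ∈ Ω, ∀ j, |A x j - B x j| ≤ δ) :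
    mu Ω A ≤ (1 + ε) * mu Ω B + 3 * (1 + ε⁻¹) * δ ^ 2 := by
  have hmeas : MeasurableSet Ω := hopen.measurableSet
  -- S(B) nonempty
  have hSBne : (Sset Ω B).Nonempty := by
    obtain ⟨CB, hCB⟩ := hbdd.isCompact_closure.exists_bound_of_continuousOn
      (continuous_finset_sum (f := fun j x => (B x j)^2) Finset.univ
        (fun j _ => ((continuous_apply j).comp ((PiLp.continuous_ofLp 2 _).comp hBc)).pow 2)).continuousOn
    obtain ⟨r, hr, _⟩ := S_one hne hopen hbdd hBc (C := CB) fun x hx =>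
      le_trans (le_abs_self _) (hCB x (subset_closure hx))
    exact ⟨r, hr⟩
  have key : ∀ r ∈ Sset Ω B, mu Ω A ≤ (1 + ε) * r + 3 * (1 + ε⁻¹) * δ ^ 2 := by
    rintro r ⟨ψ, hψ, hint1, hint2, hpos, rfl⟩
    -- pointwise bound on Ω
    have hpt : ∀ x ∈ Ω, magSq A ψ x ≤
        (1 + ε) * magSq B ψ x + 3 * (1 + ε⁻¹) * δ ^ 2 * ‖ψ x‖ ^ 2 := by
      intro x hx
      have hj : ∀ j : Fin 3,
          ‖Complex.I * fderiv ℝ ψ x (EuclideanSpace.single j 1) + (A x j : ℂ) * ψ x‖ ^ 2 ≤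
          (1 + ε) * ‖Complex.I * fderiv ℝ ψ x (EuclideanSpace.single j 1) + (B x j : ℂ) * ψ x‖ ^ 2
            + (1 + ε⁻¹) * δ ^ 2 * ‖ψ x‖ ^ 2 := by
        intro j
        set v := Complex.I * fderiv ℝ ψ x (EuclideanSpace.single j 1) + (B x j : ℂ) * ψ x with hv
        set z := ((A x j - B x j : ℝ) : ℂ) * ψ x with hzdef
        have hvz : Complex.I * fderiv ℝ ψ x (EuclideanSpace.single j 1) + (A x j : ℂ) * ψ x
            = v + z := by
          rw [hv, hzdef]
          push_cast
          ring
        rw [hvz]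
        have hz : ‖z‖ ≤ δ * ‖ψ x‖ := by
          rw [hzdef, norm_mul, Complex.norm_real, Real.norm_eq_abs]
          exact mul_le_mul_of_nonneg_right (hAB x hx j) (norm_nonneg _)
        have h2 : ‖v + z‖ ^ 2 ≤ (‖v‖ + ‖z‖) ^ 2 := by
          have := norm_add_le v z
          nlinarith [norm_nonneg (v + z), norm_nonneg v, norm_nonneg z]
        have h3 : (‖v‖ + ‖z‖) ^ 2 ≤ (1 + ε) * ‖v‖ ^ 2 + (1 + ε⁻¹) * ‖z‖ ^ 2 :=
          young_ineq hε _ _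
        have h4 : ‖z‖ ^ 2 ≤ δ ^ 2 * ‖ψ x‖ ^ 2 := by nlinarith [norm_nonneg z, norm_nonneg (ψ x), hδ.le]
        have h5 : (0:ℝ) ≤ 1 + ε⁻¹ := by positivity
        nlinarith [h2, h3, h4, h5]
      unfold magSq
      rw [Fin.sum_univ_three, Fin.sum_univ_three]
      have := hj 0; have := hj 1; have := hj 2
      linarith
    -- integrability of magSq A ψ
    have hgint : IntegrableOn
        (fun x => (1 + ε) * magSq B ψ x + 3 * (1 + ε⁻¹) * δ ^ 2 * ‖ψ x‖ ^ 2) Ω := by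
      exact (hint2.const_mul _).add (hint1.const_mul _)
    have hASM : AEStronglyMeasurable (magSq A ψ) (volume.restrict Ω) :=
      (magSq_continuousOn hopen hAc hψ).aestronglyMeasurable hmeas
    have hintA : IntegrableOn (magSq A ψ) Ω := by
      apply hgint.mono' hASM
      rw [ae_restrict_iff' hmeas]
      filter_upwards with x hx
      rw [Real.norm_eq_abs, abs_of_nonneg (by unfold magSq; positivity)]
      exact hpt x hx
    have hle : ∫ x in Ω, magSq A ψ x ≤
        ∫ x in Ω, ((1 + ε) * magSq B ψ x + 3 * (1 + ε⁻¹) * δ ^ 2 * ‖ψ x‖ ^ 2) :=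
      setIntegral_mono_on hintA hgint hmeas hpt
    have hsplit : ∫ x in Ω, ((1 + ε) * magSq B ψ x + 3 * (1 + ε⁻¹) * δ ^ 2 * ‖ψ x‖ ^ 2)
        = (1 + ε) * (∫ x in Ω, magSq B ψ x) + 3 * (1 + ε⁻¹) * δ ^ 2 * (∫ x in Ω, ‖ψ x‖ ^ 2) := by
      rw [integral_add (hint2.const_mul _) (hint1.const_mul _)]
      rw [integral_const_mul, integral_const_mul]
    have hmem : (∫ x in Ω, magSq A ψ x) / (∫ x in Ω, ‖ψ x‖ ^ 2) ∈ Sset Ω A :=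
      ⟨ψ, hψ, hint1, hintA, hpos, rfl⟩
    calc mu Ω A ≤ (∫ x in Ω, magSq A ψ x) / (∫ x in Ω, ‖ψ x‖ ^ 2) := mu_le_of_mem hmem
      _ ≤ ((1 + ε) * (∫ x in Ω, magSq B ψ x) + 3 * (1 + ε⁻¹) * δ ^ 2 * (∫ x in Ω, ‖ψ x‖ ^ 2))
          / (∫ x in Ω, ‖ψ x‖ ^ 2) := by
        have h7 : (∫ x in Ω, magSq A ψ x) ≤ (1 + ε) * (∫ x in Ω, magSq B ψ x)
            + 3 * (1 + ε⁻¹) * δ ^ 2 * (∫ x in Ω, ‖ψ x‖ ^ 2) := hsplit ▸ hle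
        gcongr
      _ = (1 + ε) * ((∫ x in Ω, magSq B ψ x) / (∫ x in Ω, ‖ψ x‖ ^ 2))
          + 3 * (1 + ε⁻¹) * δ ^ 2 := by
        rw [add_div, mul_div_assoc, mul_div_cancel_right₀ _ hpos.ne']
  -- conclude
  have h6 : (mu Ω A - 3 * (1 + ε⁻¹) * δ ^ 2) / (1 + ε) ≤ mu Ω B := by
    rw [mu_eq_sInf Ω B]
    apply le_csInf hSBne
    intro r hr
    rw [div_le_iff₀ (by positivity)]
    have := key r hr
    linarith [mul_comm r (1+ε)]
  have hpos1 : (0:ℝ) < 1 + ε := by positivity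
  rw [div_le_iff₀ hpos1] at h6
  linarith [mul_comm (mu Ω B) (1+ε)]

lemma field_unif {Ω : Set E3} (hbdd : Bornology.IsBounded Ω) (c : ℝ × ℝ) {ε : ℝ} (hε : 0 < ε) :
    ∃ δ > 0, ∀ Q ∈ SO3, ∀ Q' ∈ SO3, ∀ p p' : ℝ × ℝ,
      dist p c ≤ 1 → dist p' c ≤ 1 → dist Q Q' < δ → dist p p' < δ →
      ∀ x ∈ Ω, ∀ j, |Afield (Q, p) x j - Afield (Q', p') x j| ≤ ε := by
  set K : Set ((Matrix (Fin 3) (Fin 3) ℝ × ℝ × ℝ) × E3) :=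
    (SO3 ×ˢ Metric.closedBall c 1) ×ˢ closure Ω with hKdef
  have hK : IsCompact K :=
    (isCompact_SO3.prod (isCompact_closedBall c 1)).prod hbdd.isCompact_closure
  have hUC : UniformContinuousOn (fun pz : (Matrix (Fin 3) (Fin 3) ℝ × ℝ × ℝ) × E3 =>
      Afield pz.1 pz.2) K :=
    hK.uniformContinuousOn_of_continuous continuous_G.continuousOn
  rw [Metric.uniformContinuousOn_iff] at hUC
  obtain ⟨δ, hδ, h⟩ := hUC ε hε
  refine ⟨δ, hδ, ?_⟩
  intro Q hQ Q' hQ' p p' hp hp' hQQ hpp x hx j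
  have ha : (((Q, p) : Matrix (Fin 3) (Fin 3) ℝ × ℝ × ℝ), x) ∈ K :=
    ⟨⟨hQ, Metric.mem_closedBall.mpr hp⟩, subset_closure hx⟩
  have hb : (((Q', p') : Matrix (Fin 3) (Fin 3) ℝ × ℝ × ℝ), x) ∈ K :=
    ⟨⟨hQ', Metric.mem_closedBall.mpr hp'⟩, subset_closure hx⟩
  have hd : dist (((Q, p) : Matrix (Fin 3) (Fin 3) ℝ × ℝ × ℝ), x)
      (((Q', p') : Matrix (Fin 3) (Fin 3) ℝ × ℝ × ℝ), x) < δ := by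
    rw [Prod.dist_eq, Prod.dist_eq]
    simp only [dist_self]
    rw [max_lt_iff]
    constructor
    · rw [max_lt_iff]; exact ⟨hQQ, hpp⟩
    · exact hδ
  have hdd := h _ ha _ hb hd
  have h2 : |(Afield (Q, p) x - Afield (Q', p') x) j| ≤ ε := by
    refine le_trans (abs_coord_le _ j) ?_
    rw [← dist_eq_norm]
    exact hdd.le
  have h3 : (Afield (Q, p) x - Afield (Q', p') x) j
      = Afield (Q, p) x j - Afield (Q', p') x j := rfl
  rwa [h3] at h2

lemma key_est {Ω : Set E3} (hne : Ω.Nonempty) (hopen : IsOpen Ω) (hbdd : Bornology.IsBounded Ω)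
    (c : ℝ × ℝ) {ε : ℝ} (hε : 0 < ε) :
    ∃ δ > 0, ∀ Q ∈ SO3, ∀ Q' ∈ SO3, ∀ p p' : ℝ × ℝ,
      dist p c ≤ 1 → dist p' c ≤ 1 → dist Q Q' < δ → dist p p' < δ →
      |mu Ω (Afield (Q, p)) - mu Ω (Afield (Q', p'))| ≤ ε := by
  set C : ℝ := (|c.1| + 1) ^ 2 with hCdef
  have hC0 : 0 ≤ C := by positivity
  set e : ℝ := ε / (2 * (C + 1)) with hedef
  have he0 : 0 < e := by positivity
  set c3 : ℝ := 3 * (1 + e⁻¹) with hc3def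
  have hc30 : 0 < c3 := by positivity
  set η : ℝ := Real.sqrt (ε / (2 * c3)) with hηdef
  have hη0 : 0 < η := Real.sqrt_pos.mpr (by positivity)
  have hηsq : c3 * η ^ 2 = ε / 2 := by
    rw [hηdef, Real.sq_sqrt (by positivity : (0:ℝ) ≤ ε / (2 * c3))]
    field_simp
  obtain ⟨δ, hδ0, hfld⟩ := field_unif hbdd c hη0
  refine ⟨δ, hδ0, ?_⟩
  intro Q hQ Q' hQ' p p' hp hp' hQQ hpp
  -- uniform bound on mu
  have hbound : ∀ (R : Matrix (Fin 3) (Fin 3) ℝ), R ∈ SO3 → ∀ r : ℝ × ℝ, dist r c ≤ 1 →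
      mu Ω (Afield (R, r)) ≤ C := by
    intro R hR r hr
    apply mu_le_C hne hopen hbdd (continuous_Afield _)
    intro x hx
    have hsq : ∑ j, (Afield (R, r.1, r.2) x j) ^ 2 = r.1 ^ 2 := Afield_sq_sum hR r.1 r.2 x
    have : ∑ j, (Afield (R, r) x j) ^ 2 = r.1 ^ 2 := hsq
    rw [this, hCdef]
    have h1 : |r.1 - c.1| ≤ 1 := by
      refine le_trans ?_ hr
      rw [Prod.dist_eq, Real.dist_eq]
      exact le_max_left _ _
    nlinarith [abs_nonneg c.1, le_abs_self (r.1 - c.1), neg_abs_le (r.1 - c.1), le_abs_self c.1, neg_abs_le c.1]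
  have hABfld := hfld Q hQ Q' hQ' p p' hp hp' hQQ hpp
  have hBAfld : ∀ x ∈ Ω, ∀ j, |Afield (Q', p') x j - Afield (Q, p) x j| ≤ η := by
    intro x hx j
    rw [abs_sub_comm]
    exact hABfld x hx j
  have h1 := mu_comp hne hopen hbdd (continuous_Afield (Q, p)) (continuous_Afield (Q', p'))
    hη0 he0 hABfld
  have h2 := mu_comp hne hopen hbdd (continuous_Afield (Q', p')) (continuous_Afield (Q, p))
    hη0 he0 hBAfld
  have hC1 : mu Ω (Afield (Q, p)) ≤ C := hbound Q hQ p hp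
  have hC2 : mu Ω (Afield (Q', p')) ≤ C := hbound Q' hQ' p' hp'
  have hn1 : 0 ≤ mu Ω (Afield (Q, p)) := mu_nonneg _ _
  have hn2 : 0 ≤ mu Ω (Afield (Q', p')) := mu_nonneg _ _
  have heC : e * C ≤ ε / 2 := by
    rw [hedef, div_mul_eq_mul_div, div_le_div_iff₀ (by positivity) two_pos]
    nlinarith
  have hc3η : 3 * (1 + e⁻¹) * η ^ 2 = ε / 2 := by rw [← hc3def]; exact hηsq
  rw [abs_le]
  constructor
  · nlinarith [h2]
  · nlinarith [h1]


/-- `(Q,q,τ) ↦ μ(q n_τ^Q)` is continuous on `SO(3) × [0,∞) × (0,∞)`, and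
consequently `(q,τ) ↦ μ*(q,τ)` is continuous on `[0,∞) × (0,∞)`. -/
theorem continuity_mu_muStar (Ω : Set E3) (hne : Ω.Nonempty) (hopen : IsOpen Ω)
    (hbdd : Bornology.IsBounded Ω) :
    ContinuousOn
      (fun p : Matrix (Fin 3) (Fin 3) ℝ × ℝ × ℝ =>
        mu Ω (fun x => p.2.1 • nQ p.2.2 p.1 x))
      (SO3 ×ˢ Set.Ici (0 : ℝ) ×ˢ Set.Ioi (0 : ℝ)) ∧
    ContinuousOn (fun p : ℝ × ℝ => muStar Ω p.1 p.2)
      (Set.Ici (0 : ℝ) ×ˢ Set.Ioi (0 : ℝ)) := by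
  constructor
  · apply Metric.continuousOn_iff.mpr
    rintro ⟨Q₀, q₀, τ₀⟩ hP ε hε
    obtain ⟨δ, hδ0, hkey⟩ := key_est hne hopen hbdd (q₀, τ₀) (half_pos hε)
    refine ⟨min δ 1, lt_min hδ0 one_pos, ?_⟩
    rintro ⟨Q, q, τ⟩ hPa hdist
    have hQ : Q ∈ SO3 := hPa.1
    have hQ₀ : Q₀ ∈ SO3 := hP.1
    have hd2 : dist ((q, τ) : ℝ × ℝ) ((q₀, τ₀) : ℝ × ℝ)
        ≤ dist ((Q, q, τ) : Matrix (Fin 3) (Fin 3) ℝ × ℝ × ℝ) (Q₀, q₀, τ₀) := by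
      rw [Prod.dist_eq]; exact le_max_right _ _
    have hdQ : dist Q Q₀ ≤ dist ((Q, q, τ) : Matrix (Fin 3) (Fin 3) ℝ × ℝ × ℝ) (Q₀, q₀, τ₀) := by
      rw [Prod.dist_eq]; exact le_max_left _ _
    have h := hkey Q hQ Q₀ hQ₀ (q, τ) (q₀, τ₀)
      (le_trans hd2 (le_trans hdist.le (min_le_right δ 1)))
      (by simp)
      (lt_of_le_of_lt hdQ (lt_of_lt_of_le hdist (min_le_left δ 1)))
      (lt_of_le_of_lt hd2 (lt_of_lt_of_le hdist (min_le_left δ 1)))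
    rw [Real.dist_eq]
    calc |mu Ω (fun x => q • nQ τ Q x) - mu Ω (fun x => q₀ • nQ τ₀ Q₀ x)|
        = |mu Ω (Afield (Q, (q, τ))) - mu Ω (Afield (Q₀, (q₀, τ₀)))| := rfl
      _ ≤ ε / 2 := h
      _ < ε := half_lt_self hε
  · apply Metric.continuousOn_iff.mpr
    rintro ⟨q₀, τ₀⟩ hP ε hε
    obtain ⟨δ, hδ0, hkey⟩ := key_est hne hopen hbdd (q₀, τ₀) (half_pos hε)
    refine ⟨min δ 1, lt_min hδ0 one_pos, ?_⟩
    rintro ⟨q, τ⟩ hPa hdist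
    haveI : Nonempty ↥SO3 := ⟨⟨1, one_mem_SO3⟩⟩
    have hunif : ∀ Q : ↥SO3,
        |mu Ω (Afield (Q.1, (q, τ))) - mu Ω (Afield (Q.1, (q₀, τ₀)))| ≤ ε / 2 := by
      intro Q
      exact hkey Q.1 Q.2 Q.1 Q.2 (q, τ) (q₀, τ₀)
        (le_trans hdist.le (min_le_right δ 1)) (by simp)
        (by simpa [dist_self] using hδ0)
        (lt_of_lt_of_le hdist (min_le_left δ 1))
    have hbl1 : BddBelow (Set.range fun Q : ↥SO3 => mu Ω (Afield (Q.1, (q, τ)))) :=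
      ⟨0, by rintro _ ⟨Q, rfl⟩; exact mu_nonneg _ _⟩
    have hbl2 : BddBelow (Set.range fun Q : ↥SO3 => mu Ω (Afield (Q.1, (q₀, τ₀)))) :=
      ⟨0, by rintro _ ⟨Q, rfl⟩; exact mu_nonneg _ _⟩
    have e1 : muStar Ω q τ = ⨅ Q : ↥SO3, mu Ω (Afield (Q.1, (q, τ))) := rfl
    have e2 : muStar Ω q₀ τ₀ = ⨅ Q : ↥SO3, mu Ω (Afield (Q.1, (q₀, τ₀))) := rfl
    have hA : (⨅ Q : ↥SO3, mu Ω (Afield (Q.1, (q, τ)))) - ε / 2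
        ≤ ⨅ Q : ↥SO3, mu Ω (Afield (Q.1, (q₀, τ₀))) := by
      apply le_ciInf
      intro Q
      have h1 := ciInf_le hbl1 Q
      have h2 := hunif Q
      rw [abs_le] at h2
      linarith [h1, h2.1, h2.2]
    have hB : (⨅ Q : ↥SO3, mu Ω (Afield (Q.1, (q₀, τ₀)))) - ε / 2
        ≤ ⨅ Q : ↥SO3, mu Ω (Afield (Q.1, (q, τ))) := by
      apply le_ciInf
      intro Q
      have h1 := ciInf_le hbl2 Q
      have h2 := hunif Q
      rw [abs_le] at h2
      linarith [h1, h2.1, h2.2]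
    rw [Real.dist_eq]
    show |muStar Ω q τ - muStar Ω q₀ τ₀| < ε
    rw [e1, e2, abs_sub_lt_iff]
    constructor <;> linarith [hA, hB, half_lt_self hε]
end
end

section
/- Let Ω be a nonempty bounded open subset of ℝ³, let q ≥ 0, κ ≥ 0, S ≥ 0 and m ≥ 0. Let ψ : Ω → ℂ be continuously differentiable with 0 < ∫_Ω |ψ|² dx < ∞ and ∫_Ω |ψ|⁴ dx < ∞, and let n, ñ : Ω → ℝ³ be bounded measurable vector fields with ∫_Ω |n − ñ|⁴ dx < ∞. Assume: (i) ∫_Ω |i∇ψ + q n ψ|² dx ≤ κ² ∫_Ω |ψ|² dx; (ii) ∫_Ω |i∇ψ + q ñ ψ|² dx ≥ m ∫_Ω |ψ|² dx; (iii) (∫_Ω |ψ|⁴ dx)^{1/4} ≤ S (∫_Ω |ψ|² dx)^{1/2}. Then m ≤ κ² + 2 q κ S ‖n − ñ‖_{L⁴(Ω)} + q² S² ‖n − ñ‖²_{L⁴(Ω)}, where ‖n − ñ‖_{L⁴(Ω)} = (∫_Ω |n − ñ|⁴ dx)^{1/4}. (This is the key inequality forcing minimizers to be nematic below the critical temperature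 when the director field is L⁴-close to a field realizing the critical temperature.) -/
open MeasureTheory Real Set
open scoped RealInnerProductSpace

noncomputable section

-- helper: product of two L² functions is integrable
lemma l2mul {α : Type*} [MeasurableSpace α] {μ : Measure α} {f g : α → ℝ}
    (hf : MemLp f 2 μ) (hg : MemLp g 2 μ) : Integrable (fun x => f x * g x) μ := by
  have := (hf.smul hg (r := 1) (hpqr := ⟨by simp [ENNReal.inv_two_add_inv_two]⟩) : MemLp (g • f) 1 μ)
  rw [memLp_one_iff_integrable] at this
  exact this.congr (by filter_upwards with x; simp [mul_comm])

-- helper: Cauchy–Schwarz for integrals, with sqrt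
lemma l2cs {α : Type*} [MeasurableSpace α] {μ : Measure α} {f g : α → ℝ}
    (hf0 : ∀ x, 0 ≤ f x) (hg0 : ∀ x, 0 ≤ g x)
    (hf : MemLp f 2 μ) (hg : MemLp g 2 μ) :
    ∫ x, f x * g x ∂μ ≤ Real.sqrt (∫ x, f x ^ 2 ∂μ) * Real.sqrt (∫ x, g x ^ 2 ∂μ) := by
  have h := integral_mul_le_Lp_mul_Lq_of_nonneg (μ := μ) (p := 2) (q := 2)
    ⟨by norm_num, by norm_num, by norm_num⟩ (Filter.Eventually.of_forall hf0) (Filter.Eventually.of_forall hg0)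
    (by simpa using hf) (by simpa using hg)
  have e2 : ∀ x : ℝ, x ^ (2 : ℝ) = x ^ 2 := fun x => by
    rw [show (2 : ℝ) = ((2 : ℕ) : ℝ) by norm_num, Real.rpow_natCast]
  simp_rw [e2] at h
  calc ∫ x, f x * g x ∂μ ≤ (∫ x, f x ^ 2 ∂μ) ^ (1/2 : ℝ) * (∫ x, g x ^ 2 ∂μ) ^ (1/2 : ℝ) := h
    _ = _ := by rw [← Real.sqrt_eq_rpow, ← Real.sqrt_eq_rpow]

lemma magSq_nonneg (A : E3 → E3) (ψ : E3 → ℂ) (x : E3) : 0 ≤ magSq A ψ x :=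
  Finset.sum_nonneg fun j _ => by positivity

-- pointwise bound
lemma magSq_pt (q : ℝ) (hq : 0 ≤ q) (n n' : E3 → E3) (ψ : E3 → ℂ) (x : E3) :
    magSq (fun y => q • n' y) ψ x
      ≤ (Real.sqrt (magSq (fun y => q • n y) ψ x) + q * (‖n x - n' x‖ * ‖ψ x‖)) ^ 2 := by
  set X : EuclideanSpace ℂ (Fin 3) :=
    WithLp.toLp 2 fun j => Complex.I * fderiv ℝ ψ x (EuclideanSpace.single j 1) + ((q * n x j : ℝ) : ℂ) * ψ x
    with hX
  set Z : EuclideanSpace ℂ (Fin 3) := WithLp.toLp 2 fun j => ((q * n' x j - q * n x j : ℝ) : ℂ) * ψ x with hZ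
  have smul_apply : ∀ (v : E3) j, (q • v) j = q * v j := fun v j => rfl
  have e1 : magSq (fun y => q • n' y) ψ x = ∑ j, ‖(X + Z) j‖ ^ 2 := by
    unfold magSq
    refine Finset.sum_congr rfl fun j _ => ?_
    have : (X + Z) j = Complex.I * fderiv ℝ ψ x (EuclideanSpace.single j 1)
        + ((q * n' x j : ℝ) : ℂ) * ψ x := by
      show X j + Z j = _
      rw [hX, hZ]; push_cast; ring
    rw [this]; rfl
  have e0 : magSq (fun y => q • n y) ψ x = ∑ j, ‖X j‖ ^ 2 := rfl
  have hXg : ‖X‖ = Real.sqrt (magSq (fun y => q • n y) ψ x) := by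
    rw [e0, EuclideanSpace.norm_eq]
  have hnn : ‖n x - n' x‖ ^ 2 = ∑ j, (n x j - n' x j) ^ 2 := by
    rw [EuclideanSpace.norm_eq, Real.sq_sqrt (by positivity)]
    refine Finset.sum_congr rfl fun j _ => ?_
    simp [Real.norm_eq_abs, sq_abs]
  have hZh : ‖Z‖ = q * (‖n x - n' x‖ * ‖ψ x‖) := by
    have hsq : ‖Z‖ ^ 2 = (q * (‖n x - n' x‖ * ‖ψ x‖)) ^ 2 := by
      rw [EuclideanSpace.norm_eq, Real.sq_sqrt (by positivity)]
      have : ∀ j : Fin 3, ‖Z j‖ ^ 2 = q ^ 2 * ((n x j - n' x j) ^ 2 * ‖ψ x‖ ^ 2) := by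
        intro j
        rw [hZ]
        rw [norm_mul, Complex.norm_real, mul_pow, Real.norm_eq_abs, sq_abs]
        ring
      rw [Finset.sum_congr rfl fun j _ => this j, ← Finset.mul_sum, ← Finset.sum_mul, ← hnn]
      ring
    have h0 : 0 ≤ q * (‖n x - n' x‖ * ‖ψ x‖) := mul_nonneg hq (by positivity)
    rw [← Real.sqrt_sq (norm_nonneg Z), hsq, Real.sqrt_sq h0]
  have e2 : ∑ j, ‖(X + Z) j‖ ^ 2 = ‖X + Z‖ ^ 2 := by
    rw [EuclideanSpace.norm_eq, Real.sq_sqrt (by positivity)]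
  rw [e1, e2, ← hXg, ← hZh]
  exact pow_le_pow_left₀ (norm_nonneg _) (norm_add_le _ _) 2


/-- the key inequality forcing nematicity. If
(i) `∫|i∇ψ+qnψ|² ≤ κ²∫|ψ|²`, (ii) `∫|i∇ψ+qn'ψ|² ≥ m∫|ψ|²`, and
(iii) `‖ψ‖_{L⁴} ≤ S ‖ψ‖_{L²}`, then
`m ≤ κ² + 2qκS‖n−n'‖_{L⁴} + q²S²‖n−n'‖²_{L⁴}`. -/
theorem nematicity_key_inequality (Ω : Set E3) (hne : Ω.Nonempty) (hopen : IsOpen Ω)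
    (hbdd : Bornology.IsBounded Ω)
    (q κ S m : ℝ) (hq : 0 ≤ q) (hκ : 0 ≤ κ) (hS : 0 ≤ S) (hm : 0 ≤ m)
    (ψ : E3 → ℂ) (hψ : ContDiffOn ℝ 1 ψ Ω)
    (hψ2i : IntegrableOn (fun x => ‖ψ x‖ ^ 2) Ω)
    (hψ2pos : 0 < ∫ x in Ω, ‖ψ x‖ ^ 2)
    (hψ4i : IntegrableOn (fun x => ‖ψ x‖ ^ 4) Ω)
    (n n' : E3 → E3) (hnm : Measurable n) (hn'meas : Measurable n')
    (Mn : ℝ) (hnb : ∀ x ∈ Ω, ‖n x‖ ≤ Mn) (M' : ℝ) (hn'bound : ∀ x ∈ Ω, ‖n' x‖ ≤ M')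
    (hdiffi : IntegrableOn (fun x => ‖n x - n' x‖ ^ 4) Ω)
    (hmagi : IntegrableOn (magSq (fun y => q • n y) ψ) Ω)
    (hi : ∫ x in Ω, magSq (fun y => q • n y) ψ x ≤ κ ^ 2 * ∫ x in Ω, ‖ψ x‖ ^ 2)
    (hii : m * (∫ x in Ω, ‖ψ x‖ ^ 2) ≤ ∫ x in Ω, magSq (fun y => q • n' y) ψ x)
    (hiii : (∫ x in Ω, ‖ψ x‖ ^ 4) ^ ((1 : ℝ) / 4)
        ≤ S * (∫ x in Ω, ‖ψ x‖ ^ 2) ^ ((1 : ℝ) / 2)) :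
    m ≤ κ ^ 2
        + 2 * q * κ * S * ((∫ x in Ω, ‖n x - n' x‖ ^ 4) ^ ((1 : ℝ) / 4))
        + q ^ 2 * S ^ 2 * ((∫ x in Ω, ‖n x - n' x‖ ^ 4) ^ ((1 : ℝ) / 4)) ^ 2 := by
  set P := ∫ x in Ω, ‖ψ x‖ ^ 2 with hPdef
  set N := ∫ x in Ω, ‖n x - n' x‖ ^ 4 with hNdef
  set W := ∫ x in Ω, ‖ψ x‖ ^ 4 with hWdef
  set A := ∫ x in Ω, magSq (fun y => q • n y) ψ x with hAdef
  set D := N ^ ((1 : ℝ) / 4) with hDdef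
  have hP0 : (0 : ℝ) ≤ P := hψ2pos.le
  have hN0 : (0 : ℝ) ≤ N := by
    rw [hNdef]; exact integral_nonneg fun x => by positivity
  have hW0 : (0 : ℝ) ≤ W := by
    rw [hWdef]; exact integral_nonneg fun x => by positivity
  have hD0 : (0 : ℝ) ≤ D := Real.rpow_nonneg hN0 _
  have hA0 : (0 : ℝ) ≤ A := by
    rw [hAdef]; exact integral_nonneg fun x => magSq_nonneg _ _ _
  -- measurability
  have hψm : AEStronglyMeasurable ψ (volume.restrict Ω) :=
    hψ.continuousOn.aestronglyMeasurable hopen.measurableSet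
  have hψnm : AEStronglyMeasurable (fun x => ‖ψ x‖) (volume.restrict Ω) := hψm.norm
  have hdm : AEStronglyMeasurable (fun x => ‖n x - n' x‖) (volume.restrict Ω) :=
    ((hnm.sub hn'meas).norm).aestronglyMeasurable
  -- L² memberships
  have hψsq2 : MemLp (fun x => ‖ψ x‖ ^ 2) 2 (volume.restrict Ω) := by
    refine (memLp_two_iff_integrable_sq ?_).mpr ?_
    · exact (hψnm.aemeasurable.pow_const 2).aestronglyMeasurable
    · have : (fun x => (‖ψ x‖ ^ 2) ^ 2) = fun x => ‖ψ x‖ ^ 4 := by funext x; ring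
      rw [this]; exact hψ4i
  have hdsq2 : MemLp (fun x => ‖n x - n' x‖ ^ 2) 2 (volume.restrict Ω) := by
    refine (memLp_two_iff_integrable_sq ?_).mpr ?_
    · exact (hdm.aemeasurable.pow_const 2).aestronglyMeasurable
    · have : (fun x => (‖n x - n' x‖ ^ 2) ^ 2) = fun x => ‖n x - n' x‖ ^ 4 := by
        funext x; ring
      rw [this]; exact hdiffi
  -- C = ∫ |n-n'|² |ψ|²
  set C := ∫ x in Ω, ‖n x - n' x‖ ^ 2 * ‖ψ x‖ ^ 2 with hCdef
  have hC0 : (0 : ℝ) ≤ C := by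
    rw [hCdef]; exact integral_nonneg fun x => by positivity
  have hCint : Integrable (fun x => ‖n x - n' x‖ ^ 2 * ‖ψ x‖ ^ 2) (volume.restrict Ω) :=
    l2mul hdsq2 hψsq2
  -- Hölder: C ≤ √N √W
  have hCb : C ≤ Real.sqrt N * Real.sqrt W := by
    have h := l2cs (μ := volume.restrict Ω) (f := fun x => ‖n x - n' x‖ ^ 2)
      (g := fun x => ‖ψ x‖ ^ 2)
      (fun x => by positivity) (fun x => by positivity) hdsq2 hψsq2
    have e1 : (fun x : E3 => (‖n x - n' x‖ ^ 2) ^ 2) = fun x => ‖n x - n' x‖ ^ 4 := by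
      funext x; ring
    have e2 : (fun x : E3 => (‖ψ x‖ ^ 2) ^ 2) = fun x => ‖ψ x‖ ^ 4 := by funext x; ring
    simp_rw [e1, e2] at h
    rw [hCdef, hNdef, hWdef]
    exact h
  -- √N = D², √W ≤ S² P
  have hDsq : Real.sqrt N = D ^ 2 := by
    rw [hDdef, ← Real.rpow_natCast (N ^ ((1:ℝ)/4)) 2, ← Real.rpow_mul hN0,
      Real.sqrt_eq_rpow]
    norm_num
  have hWb : Real.sqrt W ≤ S ^ 2 * P := by
    have h1 : Real.sqrt W = (W ^ ((1:ℝ)/4)) ^ 2 := by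
      rw [← Real.rpow_natCast (W ^ ((1:ℝ)/4)) 2, ← Real.rpow_mul hW0, Real.sqrt_eq_rpow]
      norm_num
    have h2 : (S * P ^ ((1:ℝ)/2)) ^ 2 = S ^ 2 * P := by
      rw [mul_pow, ← Real.rpow_natCast (P ^ ((1:ℝ)/2)) 2, ← Real.rpow_mul hP0]
      norm_num
    rw [h1, ← h2]
    exact pow_le_pow_left₀ (Real.rpow_nonneg hW0 _) hiii 2
  have hCbound : C ≤ D ^ 2 * (S ^ 2 * P) := by
    calc C ≤ Real.sqrt N * Real.sqrt W := hCb
      _ ≤ Real.sqrt N * (S ^ 2 * P) :=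
          mul_le_mul_of_nonneg_left hWb (Real.sqrt_nonneg _)
      _ = D ^ 2 * (S ^ 2 * P) := by rw [hDsq]
  -- g, h
  set g := fun x => Real.sqrt (magSq (fun y => q • n y) ψ x) with hgdef
  set h := fun x => q * (‖n x - n' x‖ * ‖ψ x‖) with hhdef
  have hg2eq : (fun x => g x ^ 2) = magSq (fun y => q • n y) ψ := by
    funext x; simp only [hgdef]; exact Real.sq_sqrt (magSq_nonneg _ _ _)
  have hgint2 : Integrable (fun x => g x ^ 2) (volume.restrict Ω) := by
    rw [hg2eq]; exact hmagi
  have hgmem : MemLp g 2 (volume.restrict Ω) := by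
    refine (memLp_two_iff_integrable_sq ?_).mpr hgint2
    exact Real.continuous_sqrt.comp_aestronglyMeasurable hmagi.aestronglyMeasurable
  have hh2eq : (fun x => h x ^ 2) = fun x => q ^ 2 * (‖n x - n' x‖ ^ 2 * ‖ψ x‖ ^ 2) := by
    funext x; simp only [hhdef]; ring
  have hh2int : Integrable (fun x => h x ^ 2) (volume.restrict Ω) := by
    rw [hh2eq]; exact hCint.const_mul _
  have hhmem : MemLp h 2 (volume.restrict Ω) := by
    refine (memLp_two_iff_integrable_sq ?_).mpr hh2int
    exact ((hdm.mul hψnm).const_mul q)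
  have hghint : Integrable (fun x => g x * h x) (volume.restrict Ω) := l2mul hgmem hhmem
  have hsumeq : (fun x => (g x + h x) ^ 2)
      = fun x => g x ^ 2 + 2 * (g x * h x) + h x ^ 2 := by funext x; ring
  have hsum2 : Integrable (fun x => (g x + h x) ^ 2) (volume.restrict Ω) := by
    rw [hsumeq]; exact (hgint2.add (hghint.const_mul 2)).add hh2int
  -- integral values
  have hIg : ∫ x in Ω, g x ^ 2 = A := by rw [hg2eq, hAdef]
  have hIh : ∫ x in Ω, h x ^ 2 = q ^ 2 * C := by
    rw [hh2eq, integral_const_mul, hCdef]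
  -- main integral chain
  have hbig : ∫ x in Ω, magSq (fun y => q • n' y) ψ x ≤ ∫ x in Ω, (g x + h x) ^ 2 := by
    refine integral_mono_of_nonneg (Filter.Eventually.of_forall fun x => magSq_nonneg _ _ _)
      hsum2 (Filter.Eventually.of_forall fun x => ?_)
    simp only [hgdef, hhdef]
    exact magSq_pt q hq n n' ψ x
  have hexp : ∫ x in Ω, (g x + h x) ^ 2
      = A + 2 * (∫ x in Ω, g x * h x) + q ^ 2 * C := by
    rw [hsumeq]
    have i1 : Integrable (fun x => g x ^ 2 + 2 * (g x * h x)) (volume.restrict Ω) :=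
      hgint2.add (hghint.const_mul 2)
    have i2 : Integrable (fun x => 2 * (g x * h x)) (volume.restrict Ω) :=
      hghint.const_mul 2
    rw [integral_add i1 hh2int, integral_add hgint2 i2, integral_const_mul, hIg, hIh]
  -- Cauchy–Schwarz
  have hcs : ∫ x in Ω, g x * h x ≤ Real.sqrt A * Real.sqrt (q ^ 2 * C) := by
    have hcs0 := l2cs (μ := volume.restrict Ω)
      (fun x => Real.sqrt_nonneg _)
      (fun x => mul_nonneg hq (by positivity)) hgmem hhmem
    rwa [hIg, hIh] at hcs0
  -- sqrt bounds
  have hsA : Real.sqrt A ≤ κ * Real.sqrt P := by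
    have h1 : Real.sqrt A ≤ Real.sqrt (κ ^ 2 * P) := Real.sqrt_le_sqrt hi
    rwa [Real.sqrt_mul (sq_nonneg κ), Real.sqrt_sq hκ] at h1
  have hsC : Real.sqrt (q ^ 2 * C) ≤ q * (D * S * Real.sqrt P) := by
    rw [Real.sqrt_mul (sq_nonneg q), Real.sqrt_sq hq]
    refine mul_le_mul_of_nonneg_left ?_ hq
    have h1 : Real.sqrt C ≤ Real.sqrt (D ^ 2 * (S ^ 2 * P)) := Real.sqrt_le_sqrt hCbound
    rwa [Real.sqrt_mul (sq_nonneg D), Real.sqrt_mul (sq_nonneg S), Real.sqrt_sq hD0,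
      Real.sqrt_sq hS, ← mul_assoc] at h1
  -- final chain
  have hPP : Real.sqrt P * Real.sqrt P = P := Real.mul_self_sqrt hP0
  have key : m * P ≤ (κ ^ 2 + 2 * q * κ * S * D + q ^ 2 * S ^ 2 * D ^ 2) * P := by
    calc m * P ≤ ∫ x in Ω, magSq (fun y => q • n' y) ψ x := hii
      _ ≤ ∫ x in Ω, (g x + h x) ^ 2 := hbig
      _ = A + 2 * (∫ x in Ω, g x * h x) + q ^ 2 * C := hexp
      _ ≤ κ ^ 2 * P + 2 * ((κ * Real.sqrt P) * (q * (D * S * Real.sqrt P)))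
            + q ^ 2 * (D ^ 2 * (S ^ 2 * P)) := by
          refine add_le_add (add_le_add hi ?_) ?_
          · refine mul_le_mul_of_nonneg_left ?_ (by norm_num)
            calc ∫ x in Ω, g x * h x ≤ Real.sqrt A * Real.sqrt (q ^ 2 * C) := hcs
              _ ≤ (κ * Real.sqrt P) * (q * (D * S * Real.sqrt P)) :=
                  mul_le_mul hsA hsC (Real.sqrt_nonneg _) (by positivity)
          · exact mul_le_mul_of_nonneg_left hCbound (sq_nonneg q)
      _ = (κ ^ 2 + 2 * q * κ * S * D + q ^ 2 * S ^ 2 * D ^ 2) * P := by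
          linear_combination (2 * κ * q * D * S) * hPP
  exact le_of_mul_le_mul_right key hψ2pos
end
end
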